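/- arXiv:2401.16647 — 5 statements merged into one kernel-verified Lean document; each statement's English description precedes it below -/
import Mathlib

section
/- For every integer ℓ ≥ 3, the quantity k_ℓ (equal to ℓ² − ℓ·log₂ℓ + log₂ℓ − 1 when ℓ is a power of 2, and ℓ² − (μ⌊log₂ℓ⌋ + (ℓ−μ)⌈log₂ℓ⌉) + ⌊log₂ℓ⌋ with μ = 2^⌈log₂ℓ⌉ − ℓ otherwise) satisfies k_ℓ ≥ ℓ² − ℓ·log₂ℓ + log₂ℓ − ℓ(1 − 1/(2 ln 2)) − 1/(2 ln 2). -/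
/-!
For ℓ = 2^m the claim reduces to `(ℓ - 1) (1 - c) ≥ 0` with `c = 1 / (2 ln 2) < 1`.
Otherwise let `a = ⌊log₂ ℓ⌋`, so `2^a < ℓ < 2^(a+1)` and `k = ℓ² - ℓ (a + 2) + 2^(a+1) + a`;
the claim becomes `(ℓ - 1) (log₂ ℓ - a - c) + 2^(a+1) - ℓ ≥ 0`. The chord bound
`log₂ x ≥ x - 1` on `[1, 2]`, applied to `x = ℓ / 2^a`, turns this into a quadratic inequality
in `ℓ` and `2^a`, which holds because `c ≤ 4/5`.
-/

open Real

lemma Real.sub_one_le_logb_two {x : ℝ} (h1 : 1 ≤ x) (h2 : x ≤ 2) : x - 1 ≤ logb 2 x := by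
  rw [le_logb_iff_rpow_le one_lt_two (by linarith)]
  simpa [one_add_one_eq_two] using
    rpow_one_add_le_one_add_mul_self (s := 1) (by norm_num) (sub_nonneg.2 h1) (by linarith)

lemma one_div_two_mul_log_two_le : 1 / (2 * log 2) ≤ 4 / 5 := by
  have := log_two_gt_d9
  rw [div_le_iff₀ (by positivity)]; linarith

lemma Nat.pow_log_lt_self_of_ne_pow {b n : ℕ} (hn : n ≠ 0) (h : ¬ ∃ m, n = b ^ m) :
    b ^ log b n < n :=
  (pow_log_le_self b hn).lt_of_ne fun h' ↦ h ⟨_, h'.symm⟩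

lemma Nat.clog_eq_log_add_one {b n : ℕ} (hb : 1 < b) (hn : n ≠ 0) (h : ¬ ∃ m, n = b ^ m) :
    clog b n = log b n + 1 :=
  le_antisymm ((clog_le_iff_le_pow hb).2 (lt_pow_succ_log_self hb n).le)
    ((lt_clog_iff_pow_lt hb).2 (pow_log_lt_self_of_ne_pow hn h))

lemma cast_sq_sub_balanced_depth_sum {ℓ a : ℕ} (h1 : 2 ^ a ≤ ℓ) (h2 : ℓ ≤ 2 ^ (a + 1)) :
    (((ℓ ^ 2 - ((2 ^ (a + 1) - ℓ) * a + (ℓ - (2 ^ (a + 1) - ℓ)) * (a + 1)) + a : ℕ)) : ℝ) =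
      ℓ ^ 2 - ℓ * (a + 2) + 2 ^ (a + 1) + a := by
  have ha : a < ℓ := Nat.lt_two_pow_self.trans_le h1
  obtain ⟨μ, hμ⟩ := Nat.exists_eq_add_of_le h2
  obtain ⟨ν, hν⟩ := Nat.exists_eq_add_of_le (show μ ≤ ℓ by rw [pow_succ] at hμ; omega)
  have hμ' : 2 ^ (a + 1) - ℓ = μ := by omega
  have hν' : ℓ - μ = ν := by omega
  have hle : μ * a + ν * (a + 1) ≤ ℓ ^ 2 := by rw [hν]; nlinarith
  have hμr : (2 : ℝ) ^ (a + 1) = ℓ + μ := by exact_mod_cast hμ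
  rw [hμ', hν', Nat.cast_add, Nat.cast_sub hle, hμr, hν]
  push_cast
  ring

lemma sub_one_mul_sub_add_two_mul_sub_nonneg {t ℓ y c : ℝ} (ht : 1 ≤ t) (htℓ : t ≤ ℓ)
    (hy : ℓ / t - 1 ≤ y) (hc : c ≤ 4 / 5) : 0 ≤ (ℓ - 1) * (y - c) + 2 * t - ℓ := by
  have ht0 : 0 < t := by linarith
  have hy' : ℓ - t ≤ t * y := by
    rw [div_sub_one ht0.ne', div_le_iff₀ ht0] at hy; linarith
  -- at `c = 4/5` this is `(ℓ - 7t/5 - 1/2)² + t²/25 + 2t/5 - 1/4`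
  have hP : 0 ≤ (ℓ - 1) * (ℓ - t) - c * t * (ℓ - 1) + t * (2 * t - ℓ) := by
    nlinarith [sq_nonneg (ℓ - 7 / 5 * t - 1 / 2),
      mul_le_mul_of_nonneg_left hc (by nlinarith : 0 ≤ t * (ℓ - 1))]
  have : 0 ≤ t * ((ℓ - 1) * (y - c) + 2 * t - ℓ) := by
    nlinarith [mul_le_mul_of_nonneg_left hy' (by linarith : 0 ≤ ℓ - 1)]
  exact nonneg_of_mul_nonneg_right this ht0

theorem stmt4 (ℓ : ℕ) (hℓ : 3 ≤ ℓ) (k : ℕ)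
    (hk1 : (∃ m : ℕ, ℓ = 2 ^ m) →
      (k : ℝ) = (ℓ : ℝ) ^ 2 - (ℓ : ℝ) * Real.logb 2 ℓ + Real.logb 2 ℓ - 1)
    (hk2 : (¬ ∃ m : ℕ, ℓ = 2 ^ m) →
      k = ℓ ^ 2 - ((2 ^ Nat.clog 2 ℓ - ℓ) * Nat.log 2 ℓ
            + (ℓ - (2 ^ Nat.clog 2 ℓ - ℓ)) * Nat.clog 2 ℓ) + Nat.log 2 ℓ) :
    (k : ℝ) ≥ (ℓ : ℝ) ^ 2 - (ℓ : ℝ) * Real.logb 2 ℓ + Real.logb 2 ℓ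
      - (ℓ : ℝ) * (1 - 1 / (2 * Real.log 2)) - 1 / (2 * Real.log 2) := by
  have hc := one_div_two_mul_log_two_le
  have hℓ1 : (1 : ℝ) ≤ ℓ := by exact_mod_cast (by omega : 1 ≤ ℓ)
  by_cases hp : ∃ m : ℕ, ℓ = 2 ^ m
  · rw [hk1 hp]
    nlinarith
  · set a := Nat.log 2 ℓ
    have hℓ0 : ℓ ≠ 0 := by omega
    have hlo := Nat.pow_log_lt_self_of_ne_pow hℓ0 hp
    have hhi := Nat.lt_pow_succ_log_self one_lt_two ℓ
    rw [hk2 hp, Nat.clog_eq_log_add_one one_lt_two hℓ0 hp,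
      cast_sq_sub_balanced_depth_sum hlo.le hhi.le]
    have hlo' : (2 : ℝ) ^ a ≤ ℓ := by exact_mod_cast hlo.le
    have hhi' : (ℓ : ℝ) ≤ 2 * 2 ^ a := by exact_mod_cast pow_succ' 2 a ▸ hhi.le
    have ht : (0 : ℝ) < 2 ^ a := by positivity
    have hy : ℓ / 2 ^ a - 1 ≤ logb 2 ℓ - a := by
      have hdiv : logb 2 (ℓ / 2 ^ a) = logb 2 ℓ - a := by
        rw [logb_div (by positivity) ht.ne', logb_pow, logb_self_eq_one one_lt_two, mul_one]
      rw [← hdiv]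
      exact sub_one_le_logb_two ((one_le_div ht).2 hlo') ((div_le_iff₀ ht).2 hhi')
    linear_combination sub_one_mul_sub_add_two_mul_sub_nonneg (one_le_pow₀ one_le_two) hlo' hy hc
end

section
/- Let ℓ ≥ 3, n = 2^ℓ, and let s be an anchor-decodable sequence. Then the encoding map φ : {0,1}^{k(s)} → {0,1}^n defined by placing ℓ ones at positions p_ℓ, p_{ℓ−1}, …, p_1 in ℤ_n, where p_ℓ = dec(x_ℓ) and p_{j} = p_{j+1} + 1 + dec(x_j) mod n (with x = x_ℓ ∥ x_{ℓ−1} ∥ ⋯ ∥ x_1, |x_i| = s(i)), produces a vector of Hamming weight exactly ℓ for every input x. -/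
/-- The vector γ associated with a sequence `s` of length `ℓ`:
`γ 0 = 2^ℓ - 1 - ∑_{i=1}^{ℓ-1} 2^{s i}` and `γ m = 2^{s (ℓ - m)} - 1` for `1 ≤ m ≤ ℓ-1`. -/
def gammaVec (ℓ : ℕ) (s : ℕ → ℕ) (m : ℕ) : ℕ :=
  if m = 0 then 2 ^ ℓ - 1 - ∑ i ∈ Finset.Icc 1 (ℓ - 1), 2 ^ (s i)
  else 2 ^ (s (ℓ - m)) - 1

/-- A non-decreasing sequence `s` of length `ℓ` with `s ℓ = ℓ` is anchor-decodable if
`2^ℓ - ∑_{i<ℓ} 2^{s i} ≥ 2^{s (ℓ-1)}` and γ differs from all its non-trivial cyclic shifts. -/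
def AnchorDecodable (ℓ : ℕ) (s : ℕ → ℕ) : Prop :=
  (∀ i ∈ Finset.Icc 1 ℓ, ∀ j ∈ Finset.Icc 1 ℓ, i ≤ j → s i ≤ s j) ∧
  s ℓ = ℓ ∧
  2 ^ (s (ℓ - 1)) ≤ 2 ^ ℓ - ∑ i ∈ Finset.Icc 1 (ℓ - 1), 2 ^ (s i) ∧
  ∀ ℓ₀ : ℕ, 0 < ℓ₀ → ℓ₀ < ℓ →
    ∃ m < ℓ, gammaVec ℓ s ((m + ℓ₀) % ℓ) ≠ gammaVec ℓ s m

/-! Unrolling the recurrence gives `p j = p ℓ + N j` with `N j = ∑_{j ≤ m < ℓ} (1 + d m)`.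
The offsets `N j` strictly decrease in `j` and are all below `N 1 ≤ ∑_{i<ℓ} 2^{s i} < 2^ℓ`,
so they stay distinct modulo `2^ℓ`; hence the `ℓ` anchors `p 1, …, p ℓ` are distinct. -/

open Finset

theorem AnchorDecodable.sum_Ico_one_add_lt_two_pow {ℓ : ℕ} {s d : ℕ → ℕ}
    (hs : AnchorDecodable ℓ s) (hd : ∀ j ∈ Icc 1 ℓ, d j < 2 ^ s j) :
    ∑ m ∈ Ico 1 ℓ, (1 + d m) < 2 ^ ℓ := by
  rcases Nat.eq_zero_or_pos ℓ with rfl | hℓ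
  · simp
  calc ∑ m ∈ Ico 1 ℓ, (1 + d m) ≤ ∑ i ∈ Icc 1 (ℓ - 1), 2 ^ s i := by
        rw [← Ico_add_one_right_eq_Icc, Nat.sub_one_add_one hℓ.ne']
        refine sum_le_sum fun m hm => ?_
        have := hd m (Ico_subset_Icc_self hm)
        omega
    _ < 2 ^ ℓ := Nat.lt_of_sub_pos (lt_of_lt_of_le (Nat.two_pow_pos _) hs.2.2.1)

theorem eq_add_sum_Ico_of_forall_eq_succ_add {M : Type*} [AddCommMonoid M] {p f : ℕ → M}
    {a b : ℕ} (h : ∀ j, a ≤ j → j < b → p j = p (j + 1) + f j) {j : ℕ} (haj : a ≤ j)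
    (hjb : j ≤ b) : p j = p b + ∑ m ∈ Ico j b, f m := by
  induction hjb using Nat.decreasingInduction with
  | self => simp
  | of_succ k hk ih =>
    rw [h k haj hk, ih (by omega), sum_eq_sum_Ico_succ_bot hk, add_comm (f k), add_assoc]

theorem strictAntiOn_sum_Ico {g : ℕ → ℕ} (hg : ∀ m, 0 < g m) (b : ℕ) :
    StrictAntiOn (fun j => ∑ m ∈ Ico j b, g m) (Set.Iic b) := by
  intro j _ k (hkb : k ≤ b) hjk
  dsimp only
  rw [← sum_Ico_consecutive g hjk.le hkb, lt_add_iff_pos_left]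
  exact sum_pos (fun m _ => hg m) (nonempty_Ico.mpr hjk)

open Classical in
theorem stmt6_general (ℓ : ℕ) (s : ℕ → ℕ) (hs : AnchorDecodable ℓ s)
    (d : ℕ → ℕ) (hd : ∀ j ∈ Finset.Icc 1 ℓ, d j < 2 ^ (s j))
    (p : ℕ → ZMod (2 ^ ℓ))
    (hp : ∀ j ∈ Finset.Icc 1 (ℓ - 1), p j = p (j + 1) + 1 + (d j : ZMod (2 ^ ℓ)))
    (c : ZMod (2 ^ ℓ) → Bool)
    (hc : ∀ z, c z = decide (∃ j ∈ Finset.Icc 1 ℓ, p j = z)) :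
    (Finset.univ.filter fun z => c z = true).card = ℓ := by
  set N : ℕ → ℕ := fun j => ∑ m ∈ Ico j ℓ, (1 + d m)
  have hN_anti : StrictAntiOn N (Set.Iic ℓ) :=
    strictAntiOn_sum_Ico (fun _ => by omega) ℓ
  have hpN : ∀ j ∈ Icc 1 ℓ, p j = p ℓ + N j := by
    intro j hj
    rw [mem_Icc] at hj
    push_cast [N]
    refine eq_add_sum_Ico_of_forall_eq_succ_add (fun k hk hkℓ => ?_) hj.1 hj.2
    rw [hp k (mem_Icc.mpr ⟨hk, by omega⟩), add_assoc]
  have hN_lt : ∀ j ∈ Icc 1 ℓ, N j < 2 ^ ℓ := fun j hj =>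
    have hj := mem_Icc.mp hj
    calc N j ≤ N 1 := hN_anti.antitoneOn (Set.mem_Iic.mpr (by omega)) (Set.mem_Iic.mpr hj.2) hj.1
      _ < 2 ^ ℓ := hs.sum_Ico_one_add_lt_two_pow hd
  have hinj : Set.InjOn p (Icc 1 ℓ) := by
    intro i hi j hj hij
    rw [hpN i hi, hpN j hj, add_right_inj] at hij
    exact hN_anti.injOn
      (Set.mem_Iic.mpr (mem_Icc.mp hi).2) (Set.mem_Iic.mpr (mem_Icc.mp hj).2)
      (CharP.natCast_injOn_Iio (ZMod (2 ^ ℓ)) (2 ^ ℓ) (hN_lt i hi) (hN_lt j hj) hij)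
  have himage : (univ.filter fun z => c z = true) = (Icc 1 ℓ).image p := by
    ext z
    simp [hc]
  rw [himage, card_image_of_injOn hinj, Nat.card_Icc, Nat.add_sub_cancel]

open Classical in
theorem stmt6 (ℓ : ℕ) (hℓ : 3 ≤ ℓ) (s : ℕ → ℕ) (hs : AnchorDecodable ℓ s)
    (d : ℕ → ℕ) (hd : ∀ j ∈ Finset.Icc 1 ℓ, d j < 2 ^ (s j))
    (p : ℕ → ZMod (2 ^ ℓ))
    (hpl : p ℓ = (d ℓ : ZMod (2 ^ ℓ)))
    (hp : ∀ j ∈ Finset.Icc 1 (ℓ - 1), p j = p (j + 1) + 1 + (d j : ZMod (2 ^ ℓ)))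
    (c : ZMod (2 ^ ℓ) → Bool)
    (hc : ∀ z, c z = decide (∃ j ∈ Finset.Icc 1 ℓ, p j = z)) :
    (Finset.univ.filter fun z => c z = true).card = ℓ :=
  stmt6_general ℓ s hs d hd p hp c hc
end

section
/- Let ℓ ≥ 3, n = 2^ℓ, and let s be an anchor-decodable sequence. Then the encoding map φ : {0,1}^{k(s)} → {0,1}^n (placing ones at positions determined by cumulative gaps dec(x_j) as in the gap-encoding construction) is injective. -/
open Classical in
noncomputable def gapEncode (ℓ : ℕ) (d : ℕ → ℕ) : ZMod (2 ^ ℓ) → Bool :=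
  fun z => decide (∃ j ∈ Finset.Icc 1 ℓ,
    z = ((d ℓ + ∑ i ∈ Finset.Icc j (ℓ - 1), (1 + d i) : ℕ) : ZMod (2 ^ ℓ)))


/-!
Read cyclically from the anchor `d ℓ`, the ones of `gapEncode ℓ d` are separated by the gaps
`gapVec ℓ d m + 1`, so a codeword determines the vector `gapVec ℓ d` up to a rotation, together
with the position of the anchor. The bounds `d j < 2 ^ s j` make `gapVec ℓ d` at most
`γ = gammaVec ℓ s` away from the anchor gap and at least `γ` at it, and both vectors sum to
`2 ^ ℓ - ℓ`. Since `γ` is largest at its anchor entry, a nontrivial rotation `k` between two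
codeword readings would force both gap vectors to equal `γ`, making `γ` invariant under rotation
by `k`, which anchor-decodability excludes. So `k = 0`, and equal gaps and anchors give equal
messages.
-/

open Finset

/-- `gapVec ℓ d m + 1` is the gap in front of the `m`-th one of `gapEncode ℓ d`, the ones being
counted upwards from the anchor `d ℓ`; `m = 0` is the gap wrapping around to the anchor. Indexed
this way it is compared entrywise with `gammaVec ℓ s`. -/
def gapVec (ℓ : ℕ) (d : ℕ → ℕ) (m : ℕ) : ℕ :=
  if m = 0 then 2 ^ ℓ - ℓ - ∑ j ∈ Icc 1 (ℓ - 1), d j else d (ℓ - m)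

/-- The positions of the ones of `gapEncode ℓ d`, lifted to `ℕ` and continued periodically. -/
def onePos (ℓ : ℕ) (d : ℕ → ℕ) (m : ℕ) : ℕ :=
  d ℓ + ∑ t ∈ Icc 1 m, (gapVec ℓ d (t % ℓ) + 1)

section Positions

variable {ℓ : ℕ} {d : ℕ → ℕ}

lemma onePos_zero : onePos ℓ d 0 = d ℓ := by simp [onePos]

lemma onePos_succ (m : ℕ) :
    onePos ℓ d (m + 1) = onePos ℓ d m + (gapVec ℓ d ((m + 1) % ℓ) + 1) := by
  rw [onePos, onePos, sum_Icc_succ_top (by omega), add_assoc]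

lemma onePos_strictMono : StrictMono (onePos ℓ d) :=
  strictMono_nat_of_lt_succ fun m => by rw [onePos_succ]; omega

lemma onePos_of_lt {m : ℕ} (hm : m < ℓ) :
    onePos ℓ d m = d ℓ + ∑ i ∈ Icc (ℓ - m) (ℓ - 1), (1 + d i) := by
  rw [onePos]
  congr 1
  refine sum_nbij' (ℓ - ·) (ℓ - ·) ?_ ?_ ?_ ?_ ?_ <;> intro t ht <;>
    simp only [mem_Icc] at ht ⊢ <;> try omega
  rw [Nat.mod_eq_of_lt (by omega), gapVec, if_neg (by omega), add_comm]

lemma gapEncode_eq_true_iff (z : ZMod (2 ^ ℓ)) :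
    gapEncode ℓ d z = true ↔ ∃ m < ℓ, z = onePos ℓ d m := by
  simp only [gapEncode, decide_eq_true_eq, mem_Icc]
  constructor
  · rintro ⟨j, hj, rfl⟩
    exact ⟨ℓ - j, by omega, by rw [onePos_of_lt (by omega), Nat.sub_sub_self hj.2]⟩
  · rintro ⟨m, hm, rfl⟩
    exact ⟨ℓ - m, by omega, by rw [onePos_of_lt hm]⟩

lemma onePos_add_period (hℓ : 0 < ℓ) (hfit : ℓ + ∑ j ∈ Icc 1 (ℓ - 1), d j ≤ 2 ^ ℓ) (m : ℕ) :
    onePos ℓ d (m + ℓ) = onePos ℓ d m + 2 ^ ℓ := by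
  induction m with
  | zero =>
    have hsum : ∑ i ∈ Icc 1 (ℓ - 1), (1 + d i) = (ℓ - 1) + ∑ j ∈ Icc 1 (ℓ - 1), d j := by
      rw [sum_add_distrib]; simp
    have h := onePos_succ (ℓ := ℓ) (d := d) (ℓ - 1)
    rw [Nat.sub_add_cancel hℓ, Nat.mod_self, onePos_of_lt (m := ℓ - 1) (by omega),
      Nat.sub_sub_self hℓ, gapVec, if_pos rfl, hsum] at h
    rw [zero_add, h, onePos_zero]
    omega
  | succ m ih =>
    rw [show m + 1 + ℓ = m + ℓ + 1 by omega, onePos_succ, ih, onePos_succ, Nat.add_right_comm m ℓ,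
      Nat.add_mod_right]
    ring

lemma onePos_add_mul_period (hℓ : 0 < ℓ) (hfit : ℓ + ∑ j ∈ Icc 1 (ℓ - 1), d j ≤ 2 ^ ℓ)
    (m k : ℕ) : onePos ℓ d (m + k * ℓ) = onePos ℓ d m + k * 2 ^ ℓ := by
  induction k with
  | zero => simp
  | succ k ih => rw [add_mul, one_mul, ← add_assoc, onePos_add_period hℓ hfit, ih]; ring

lemma gapEncode_onePos (hℓ : 0 < ℓ) (hfit : ℓ + ∑ j ∈ Icc 1 (ℓ - 1), d j ≤ 2 ^ ℓ) (m : ℕ) :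
    gapEncode ℓ d (onePos ℓ d m) = true := by
  rw [gapEncode_eq_true_iff]
  refine ⟨m % ℓ, Nat.mod_lt _ hℓ, ?_⟩
  conv_lhs => rw [← Nat.mod_add_div' m ℓ]
  rw [onePos_add_mul_period hℓ hfit, Nat.cast_add, Nat.cast_mul, ZMod.natCast_self, mul_zero,
    add_zero]

lemma gapEncode_onePos_add (hℓ : 0 < ℓ) (hfit : ℓ + ∑ j ∈ Icc 1 (ℓ - 1), d j ≤ 2 ^ ℓ)
    {m t : ℕ} (ht : 0 < t) (ht' : t < gapVec ℓ d ((m + 1) % ℓ) + 1) :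
    gapEncode ℓ d ((onePos ℓ d m + t : ℕ) : ZMod (2 ^ ℓ)) = false := by
  rw [Bool.eq_false_iff, ne_eq, gapEncode_eq_true_iff]
  rintro ⟨m', -, hm'⟩
  generalize hc : onePos ℓ d m' = c at hm'
  -- Shifted by `c` periods, `onePos ℓ d m + t` lies above `c` and is congruent to it, hence it is
  -- itself some `onePos ℓ d m''`, strictly between two consecutive ones.
  have hX : onePos ℓ d m + t + c * 2 ^ ℓ ≡ c [MOD 2 ^ ℓ] := by
    rw [Nat.ModEq, Nat.add_mul_mod_self_right]
    exact (ZMod.natCast_eq_natCast_iff _ _ _).1 hm'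
  have hc_le : c ≤ c * 2 ^ ℓ := Nat.le_mul_of_pos_right _ (by positivity)
  obtain ⟨k, hk⟩ := (Nat.modEq_iff_dvd' (by omega)).1 hX.symm
  rw [Nat.mul_comm (2 ^ ℓ) k] at hk
  have hlo : onePos ℓ d (m + c * ℓ) < onePos ℓ d (m' + k * ℓ) := by
    rw [onePos_add_mul_period hℓ hfit, onePos_add_mul_period hℓ hfit]
    omega
  have hhi : onePos ℓ d (m' + k * ℓ) < onePos ℓ d (m + c * ℓ + 1) := by
    rw [onePos_add_mul_period hℓ hfit, onePos_succ, onePos_add_mul_period hℓ hfit,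
      Nat.add_right_comm m, Nat.add_mul_mod_self_right]
    omega
  have := onePos_strictMono.lt_iff_lt.1 hlo
  have := onePos_strictMono.lt_iff_lt.1 hhi
  omega

end Positions

section Shift

variable {ℓ : ℕ} {d₁ d₂ : ℕ → ℕ}

lemma not_gapVec_lt_of_gapEncode_eq (hℓ : 0 < ℓ)
    (hfit₁ : ℓ + ∑ j ∈ Icc 1 (ℓ - 1), d₁ j ≤ 2 ^ ℓ)
    (hfit₂ : ℓ + ∑ j ∈ Icc 1 (ℓ - 1), d₂ j ≤ 2 ^ ℓ)
    (h : gapEncode ℓ d₁ = gapEncode ℓ d₂) {m₁ m₂ : ℕ}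
    (hpos : (onePos ℓ d₁ m₁ : ZMod (2 ^ ℓ)) = onePos ℓ d₂ m₂) :
    ¬ gapVec ℓ d₁ ((m₁ + 1) % ℓ) < gapVec ℓ d₂ ((m₂ + 1) % ℓ) := by
  intro hlt
  have hone := gapEncode_onePos hℓ hfit₁ (m₁ + 1)
  rw [onePos_succ, Nat.cast_add, hpos, ← Nat.cast_add, h,
    gapEncode_onePos_add hℓ hfit₂ (Nat.succ_pos _) (by omega)] at hone
  exact Bool.false_ne_true hone

lemma gapVec_eq_of_gapEncode_eq (hℓ : 0 < ℓ)
    (hfit₁ : ℓ + ∑ j ∈ Icc 1 (ℓ - 1), d₁ j ≤ 2 ^ ℓ)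
    (hfit₂ : ℓ + ∑ j ∈ Icc 1 (ℓ - 1), d₂ j ≤ 2 ^ ℓ)
    (h : gapEncode ℓ d₁ = gapEncode ℓ d₂) {m₁ m₂ : ℕ}
    (hpos : (onePos ℓ d₁ m₁ : ZMod (2 ^ ℓ)) = onePos ℓ d₂ m₂) :
    gapVec ℓ d₁ ((m₁ + 1) % ℓ) = gapVec ℓ d₂ ((m₂ + 1) % ℓ) :=
  le_antisymm (not_lt.1 (not_gapVec_lt_of_gapEncode_eq hℓ hfit₂ hfit₁ h.symm hpos.symm))
    (not_lt.1 (not_gapVec_lt_of_gapEncode_eq hℓ hfit₁ hfit₂ h hpos))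

lemma exists_gapVec_rotate_of_gapEncode_eq (hℓ : 0 < ℓ)
    (hfit₁ : ℓ + ∑ j ∈ Icc 1 (ℓ - 1), d₁ j ≤ 2 ^ ℓ)
    (hfit₂ : ℓ + ∑ j ∈ Icc 1 (ℓ - 1), d₂ j ≤ 2 ^ ℓ)
    (h : gapEncode ℓ d₁ = gapEncode ℓ d₂) :
    ∃ k < ℓ, (d₁ ℓ : ZMod (2 ^ ℓ)) = onePos ℓ d₂ k ∧
      ∀ m < ℓ, gapVec ℓ d₁ m = gapVec ℓ d₂ ((m + k) % ℓ) := by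
  obtain ⟨k, hk, hanchor⟩ := (gapEncode_eq_true_iff _).1 (h ▸ gapEncode_onePos hℓ hfit₁ 0)
  rw [onePos_zero] at hanchor
  have hpos : ∀ r, (onePos ℓ d₁ r : ZMod (2 ^ ℓ)) = onePos ℓ d₂ (k + r) := by
    intro r
    induction r with
    | zero => rwa [onePos_zero]
    | succ r ih =>
      rw [← add_assoc, onePos_succ, onePos_succ, gapVec_eq_of_gapEncode_eq hℓ hfit₁ hfit₂ h ih,
        Nat.cast_add, ih, ← Nat.cast_add]
  refine ⟨k, hk, hanchor, fun m hm => ?_⟩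
  have hgap := gapVec_eq_of_gapEncode_eq hℓ hfit₁ hfit₂ h (hpos (m + ℓ - 1))
  rwa [show m + ℓ - 1 + 1 = m + ℓ by omega, show k + (m + ℓ - 1) + 1 = m + k + ℓ by omega,
    Nat.add_mod_right, Nat.add_mod_right, Nat.mod_eq_of_lt hm] at hgap

end Shift

section Domination

variable {ℓ : ℕ} {s d : ℕ → ℕ}

lemma add_one_le_two_pow_of_mem (hd : ∀ j ∈ Icc 1 ℓ, d j < 2 ^ s j) {j : ℕ}
    (hj : j ∈ Icc 1 (ℓ - 1)) : d j + 1 ≤ 2 ^ s j :=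
  hd j (mem_Icc.2 ⟨(mem_Icc.1 hj).1, (mem_Icc.1 hj).2.trans (Nat.sub_le ℓ 1)⟩)

lemma sum_Icc_add_one (ℓ : ℕ) (d : ℕ → ℕ) :
    ∑ j ∈ Icc 1 (ℓ - 1), (d j + 1) = ∑ j ∈ Icc 1 (ℓ - 1), d j + (ℓ - 1) := by
  simp [sum_add_distrib]

lemma sum_add_one_le_sum_two_pow (hd : ∀ j ∈ Icc 1 ℓ, d j < 2 ^ s j) :
    ∑ j ∈ Icc 1 (ℓ - 1), (d j + 1) ≤ ∑ j ∈ Icc 1 (ℓ - 1), 2 ^ s j :=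
  sum_le_sum fun _ => add_one_le_two_pow_of_mem hd

lemma sum_two_pow_add_le_two_pow (hs : AnchorDecodable ℓ s) :
    ∑ j ∈ Icc 1 (ℓ - 1), 2 ^ s j + 2 ^ s (ℓ - 1) ≤ 2 ^ ℓ := by
  have := hs.2.2.1
  have := Nat.one_le_two_pow (n := s (ℓ - 1))
  omega

lemma add_sum_le_two_pow (hs : AnchorDecodable ℓ s) (hd : ∀ j ∈ Icc 1 ℓ, d j < 2 ^ s j) :
    ℓ + ∑ j ∈ Icc 1 (ℓ - 1), d j ≤ 2 ^ ℓ := by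
  have := sum_add_one_le_sum_two_pow hd
  rw [sum_Icc_add_one] at this
  have := sum_two_pow_add_le_two_pow hs
  have := Nat.one_le_two_pow (n := s (ℓ - 1))
  omega

lemma gammaVec_le_gammaVec_zero (hs : AnchorDecodable ℓ s) {m : ℕ} (hm : m < ℓ) :
    gammaVec ℓ s m ≤ gammaVec ℓ s 0 := by
  rcases Nat.eq_zero_or_pos m with rfl | hm0
  · rfl
  have hmono : 2 ^ s (ℓ - m) ≤ 2 ^ s (ℓ - 1) :=
    Nat.pow_le_pow_right two_pos (hs.1 _ (mem_Icc.2 ⟨by omega, by omega⟩) _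
      (mem_Icc.2 ⟨by omega, by omega⟩) (by omega))
  have := sum_two_pow_add_le_two_pow hs
  rw [gammaVec, gammaVec, if_neg hm0.ne', if_pos rfl]
  omega

lemma gammaVec_zero_le_gapVec_zero (hd : ∀ j ∈ Icc 1 ℓ, d j < 2 ^ s j) :
    gammaVec ℓ s 0 ≤ gapVec ℓ d 0 := by
  have := sum_add_one_le_sum_two_pow hd
  rw [sum_Icc_add_one] at this
  rw [gammaVec, gapVec, if_pos rfl, if_pos rfl]
  omega

lemma gapVec_le_gammaVec (hd : ∀ j ∈ Icc 1 ℓ, d j < 2 ^ s j) {m : ℕ} (hm0 : 0 < m)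
    (hm : m < ℓ) : gapVec ℓ d m ≤ gammaVec ℓ s m := by
  have := hd (ℓ - m) (mem_Icc.2 ⟨by omega, by omega⟩)
  rw [gammaVec, gapVec, if_neg hm0.ne', if_neg hm0.ne']
  omega

/-- The gaps of `d` and the vector `γ` have the same total, so once the anchor gaps agree the
pointwise bounds `d j < 2 ^ s j` must all be tight. -/
lemma gapVec_eq_gammaVec_of_zero (hs : AnchorDecodable ℓ s) (hd : ∀ j ∈ Icc 1 ℓ, d j < 2 ^ s j)
    (h0 : gapVec ℓ d 0 = gammaVec ℓ s 0) : ∀ m < ℓ, gapVec ℓ d m = gammaVec ℓ s m := by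
  intro m hm
  rcases Nat.eq_zero_or_pos m with rfl | hm0
  · exact h0
  have htight : ∑ j ∈ Icc 1 (ℓ - 1), (d j + 1) = ∑ j ∈ Icc 1 (ℓ - 1), 2 ^ s j := by
    have := sum_two_pow_add_le_two_pow hs
    have := add_sum_le_two_pow hs hd
    have := Nat.one_le_two_pow (n := s (ℓ - 1))
    rw [gapVec, gammaVec, if_pos rfl, if_pos rfl] at h0
    rw [sum_Icc_add_one]
    omega
  have := (sum_eq_sum_iff_of_le fun _ => add_one_le_two_pow_of_mem hd).1 htight (ℓ - m)
    (mem_Icc.2 ⟨by omega, by omega⟩)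
  rw [gammaVec, gapVec, if_neg hm0.ne', if_neg hm0.ne']
  omega

lemma gapVec_zero_eq_gammaVec_zero {d' : ℕ → ℕ} (hs : AnchorDecodable ℓ s)
    (hd : ∀ j ∈ Icc 1 ℓ, d j < 2 ^ s j) (hd' : ∀ j ∈ Icc 1 ℓ, d' j < 2 ^ s j) {k : ℕ}
    (hk0 : 0 < k) (hk : k < ℓ) (h : gapVec ℓ d 0 = gapVec ℓ d' k) :
    gapVec ℓ d 0 = gammaVec ℓ s 0 :=
  le_antisymm (h ▸ (gapVec_le_gammaVec hd' hk0 hk).trans (gammaVec_le_gammaVec_zero hs hk))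
    (gammaVec_zero_le_gapVec_zero hd)

end Domination

lemma eq_of_anchor_eq_of_gapVec_eq {ℓ : ℕ} {d₁ d₂ : ℕ → ℕ} (h₁ : d₁ ℓ < 2 ^ ℓ) (h₂ : d₂ ℓ < 2 ^ ℓ)
    (hanchor : (d₁ ℓ : ZMod (2 ^ ℓ)) = d₂ ℓ) (hgap : ∀ m < ℓ, gapVec ℓ d₁ m = gapVec ℓ d₂ m) :
    ∀ j ∈ Icc 1 ℓ, d₁ j = d₂ j := by
  intro j hj
  obtain ⟨hj1, hjℓ⟩ := mem_Icc.1 hj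
  rcases hjℓ.lt_or_eq with hjℓ | rfl
  · simpa [gapVec, show ℓ - j ≠ 0 by omega, Nat.sub_sub_self hjℓ.le] using hgap (ℓ - j) (by omega)
  · simpa [ZMod.val_natCast_of_lt h₁, ZMod.val_natCast_of_lt h₂] using congrArg ZMod.val hanchor

theorem stmt7 (ℓ : ℕ) (hℓ : 3 ≤ ℓ) (s : ℕ → ℕ) (hs : AnchorDecodable ℓ s)
    (d₁ d₂ : ℕ → ℕ)
    (hd₁ : ∀ j ∈ Finset.Icc 1 ℓ, d₁ j < 2 ^ (s j))
    (hd₂ : ∀ j ∈ Finset.Icc 1 ℓ, d₂ j < 2 ^ (s j))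
    (heq : gapEncode ℓ d₁ = gapEncode ℓ d₂) :
    ∀ j ∈ Finset.Icc 1 ℓ, d₁ j = d₂ j := by
  have hℓ0 : 0 < ℓ := by omega
  obtain ⟨k, hk, hanchor, hrot⟩ := exists_gapVec_rotate_of_gapEncode_eq hℓ0
    (add_sum_le_two_pow hs hd₁) (add_sum_le_two_pow hs hd₂) heq
  rcases Nat.eq_zero_or_pos k with rfl | hk0
  · have hlt : ∀ d : ℕ → ℕ, (∀ j ∈ Icc 1 ℓ, d j < 2 ^ s j) → d ℓ < 2 ^ ℓ := fun d hd => by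
      simpa [hs.2.1] using hd ℓ (mem_Icc.2 ⟨hℓ0, le_rfl⟩)
    rw [onePos_zero] at hanchor
    exact eq_of_anchor_eq_of_gapVec_eq (hlt d₁ hd₁) (hlt d₂ hd₂) hanchor
      fun m hm => by rw [hrot m hm, add_zero, Nat.mod_eq_of_lt hm]
  exfalso
  have hγ₁ := gapVec_eq_gammaVec_of_zero hs hd₁ <| gapVec_zero_eq_gammaVec_zero hs hd₁ hd₂ hk0 hk
    (by simpa [Nat.mod_eq_of_lt hk] using hrot 0 hℓ0)
  have hγ₂ := gapVec_eq_gammaVec_of_zero hs hd₂ <| gapVec_zero_eq_gammaVec_zero hs hd₂ hd₁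
    (Nat.sub_pos_of_lt hk) (Nat.sub_lt hℓ0 hk0)
    (by simpa [Nat.sub_add_cancel hk.le] using (hrot (ℓ - k) (by omega)).symm)
  obtain ⟨m, hm, hne⟩ := hs.2.2.2 k hk0 hk
  exact hne (by rw [← hγ₁ m hm, hrot m hm, hγ₂ _ (Nat.mod_lt _ hℓ0)])
end

section
/- Let ℓ ≥ 3 and let c ∈ {0,1}^n, n = 2^ℓ, be a codeword produced by the gap encoder with anchor-decodable sequence s from a message x whose blocks x_{ℓ−1},…,x_1 are not all the all-ones strings. Let g[anchor] denote the cyclic gap (number of zeros) immediately preceding the anchor one. Then g[anchor] > 2^ℓ − 1 − ∑_{i=1}^{ℓ−1} 2^{s(i)} ≥ 2^{s(ℓ−1)} − 1 ≥ max_{1≤i≤ℓ−1}(2^{s(i)} − 1), and hence the anchor gap is the strict maximum among all ℓ cyclic gaps of c. -/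
/-! The non-anchor gaps are bounded blockwise by `2 ^ s i - 1`, and at least one block is not
all ones, so their total is strictly below `∑ (2 ^ s i - 1) = ∑ 2 ^ s i - (ℓ - 1)`. The anchor
gap is what remains of the `2 ^ ℓ - ℓ` zeros, hence exceeds `2 ^ ℓ - 1 - ∑ 2 ^ s i`; the
anchor-decodability budget bounds this from below by `2 ^ s (ℓ - 1) - 1`, which by monotonicity
of `s` dominates every block bound. -/

theorem Finset.sum_two_pow_sub_one {ι : Type*} (t : Finset ι) (s : ι → ℕ) :
    ∑ i ∈ t, (2 ^ s i - 1) = ∑ i ∈ t, 2 ^ s i - t.card := by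
  rw [Finset.sum_tsub_distrib _ fun _ _ => Nat.one_le_two_pow, Finset.card_eq_sum_ones]

namespace AnchorDecodable

variable {ℓ : ℕ} {s : ℕ → ℕ}

theorem two_pow_le_two_pow_pred (hs : AnchorDecodable ℓ s) {i : ℕ}
    (hi : i ∈ Finset.Icc 1 (ℓ - 1)) : 2 ^ s i ≤ 2 ^ s (ℓ - 1) := by
  rw [Finset.mem_Icc] at hi
  exact Nat.pow_le_pow_right two_pos <|
    hs.1 i (Finset.mem_Icc.2 ⟨hi.1, by omega⟩) (ℓ - 1) (Finset.mem_Icc.2 ⟨by omega, by omega⟩) hi.2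

theorem two_pow_pred_add_sum_le (hs : AnchorDecodable ℓ s) :
    2 ^ s (ℓ - 1) + ∑ i ∈ Finset.Icc 1 (ℓ - 1), 2 ^ s i ≤ 2 ^ ℓ := by
  have hbudget := hs.2.2.1
  have hpos : 1 ≤ 2 ^ s (ℓ - 1) := Nat.one_le_two_pow
  omega

end AnchorDecodable

theorem stmt8_general (ℓ : ℕ) (s : ℕ → ℕ) (hs : AnchorDecodable ℓ s)
    (d : ℕ → ℕ)
    (hd : ∀ i ∈ Finset.Icc 1 (ℓ - 1), d i ≤ 2 ^ (s i) - 1)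
    (hne : ∃ i ∈ Finset.Icc 1 (ℓ - 1), d i ≠ 2 ^ (s i) - 1)
    (ganchor : ℕ)
    (hg : ganchor = 2 ^ ℓ - ℓ - ∑ i ∈ Finset.Icc 1 (ℓ - 1), d i) :
    ganchor > 2 ^ ℓ - 1 - ∑ i ∈ Finset.Icc 1 (ℓ - 1), 2 ^ (s i) ∧
    2 ^ ℓ - 1 - ∑ i ∈ Finset.Icc 1 (ℓ - 1), 2 ^ (s i) ≥ 2 ^ (s (ℓ - 1)) - 1 ∧
    (∀ i ∈ Finset.Icc 1 (ℓ - 1), 2 ^ (s i) - 1 ≤ 2 ^ (s (ℓ - 1)) - 1) ∧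
    (∀ i ∈ Finset.Icc 1 (ℓ - 1), d i < ganchor) := by
  obtain ⟨j, hj, hdj⟩ := hne
  have hgaps : ∑ i ∈ Finset.Icc 1 (ℓ - 1), d i < ∑ i ∈ Finset.Icc 1 (ℓ - 1), (2 ^ s i - 1) :=
    Finset.sum_lt_sum hd ⟨j, hj, (hd j hj).lt_of_ne hdj⟩
  rw [Finset.sum_two_pow_sub_one, Nat.card_Icc, Nat.add_sub_cancel] at hgaps
  have hbudget := hs.two_pow_pred_add_sum_le
  have hpos : 1 ≤ 2 ^ s (ℓ - 1) := Nat.one_le_two_pow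
  have hmax : ∀ i ∈ Finset.Icc 1 (ℓ - 1), 2 ^ s i - 1 ≤ 2 ^ s (ℓ - 1) - 1 :=
    fun i hi => Nat.sub_le_sub_right (hs.two_pow_le_two_pow_pred hi) 1
  refine ⟨by omega, by omega, hmax, fun i hi => ?_⟩
  have := hmax i hi
  have := hd i hi
  omega

theorem stmt8 (ℓ : ℕ) (hℓ : 3 ≤ ℓ) (s : ℕ → ℕ) (hs : AnchorDecodable ℓ s)
    (d : ℕ → ℕ)
    (hd : ∀ i ∈ Finset.Icc 1 (ℓ - 1), d i ≤ 2 ^ (s i) - 1)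
    (hne : ∃ i ∈ Finset.Icc 1 (ℓ - 1), d i ≠ 2 ^ (s i) - 1)
    (ganchor : ℕ)
    (hg : ganchor = 2 ^ ℓ - ℓ - ∑ i ∈ Finset.Icc 1 (ℓ - 1), d i) :
    ganchor > 2 ^ ℓ - 1 - ∑ i ∈ Finset.Icc 1 (ℓ - 1), 2 ^ (s i) ∧
    2 ^ ℓ - 1 - ∑ i ∈ Finset.Icc 1 (ℓ - 1), 2 ^ (s i) ≥ 2 ^ (s (ℓ - 1)) - 1 ∧
    (∀ i ∈ Finset.Icc 1 (ℓ - 1), 2 ^ (s i) - 1 ≤ 2 ^ (s (ℓ - 1)) - 1) ∧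
    (∀ i ∈ Finset.Icc 1 (ℓ - 1), d i < ganchor) :=
  stmt8_general ℓ s hs d hd hne ganchor hg
end

section
/- Let ℓ ≥ 3, and consider all length-ℓ non-decreasing integer sequences s with s(ℓ) = ℓ that are anchor-decodable. Then max_s ∑_i s(i) ≤ ℓ² − ℓ·log₂ℓ + log₂ℓ when ℓ is a power of 2, and this maximum is not attained: every sequence achieving ∑_i s(i) = ℓ² − ℓ·log₂ℓ + log₂ℓ must have s(i) = ℓ − log₂ℓ for all 1 ≤ i ≤ ℓ−1, which violates the cyclic-shift condition of anchor-decodability. -/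
/-!
Write `ℓ = 2 ^ m` and `c = ℓ - m`, so that `2 ^ ℓ = ℓ * 2 ^ c`. The decodability condition is a
Kraft inequality for the `ℓ` exponents `s 1, …, s (ℓ - 1), s (ℓ - 1)`: their powers of two sum to at
most `ℓ * 2 ^ c`. Convexity of `x ↦ 2 ^ x` (via its tangent line at `c`) turns this into
`∑_{i < ℓ} s i + s (ℓ - 1) ≤ ℓ * c`, and since `s (ℓ - 1)` dominates the other exponents,
`∑_{i < ℓ} s i ≤ (ℓ - 1) * c`. This is the bound. At equality every `s i` with `i < ℓ` equals `c`;
then all entries of `γ` equal `2 ^ c - 1`, so `γ` coincides with its cyclic shifts.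
-/

open Finset

lemma sum_Icc_one_eq_sum_Icc_pred_add {M : Type*} [AddCommMonoid M] {n : ℕ} (hn : 1 ≤ n)
    (g : ℕ → M) : ∑ i ∈ Icc 1 n, g i = ∑ i ∈ Icc 1 (n - 1), g i + g n := by
  obtain ⟨k, rfl⟩ := Nat.exists_eq_add_of_le' hn
  rw [Nat.add_sub_cancel, sum_Icc_succ_top (by omega)]

/-- The tangent line of `x ↦ 2 ^ x` at `c`, divided by `2 ^ c` and cleared of subtraction. -/
lemma two_pow_mul_succ_le_two_pow_add (c x : ℕ) : 2 ^ c * (x + 1) ≤ 2 ^ x + c * 2 ^ c := by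
  rcases le_or_gt c x with hcx | hxc
  · obtain ⟨d, rfl⟩ := Nat.exists_eq_add_of_le hcx
    have hd : d + 1 ≤ 2 ^ d := Nat.lt_two_pow_self
    calc 2 ^ c * (c + d + 1) = 2 ^ c * (d + 1) + c * 2 ^ c := by ring
      _ ≤ 2 ^ c * 2 ^ d + c * 2 ^ c := by gcongr
      _ = 2 ^ (c + d) + c * 2 ^ c := by rw [pow_add]
  · calc 2 ^ c * (x + 1) ≤ 2 ^ c * c := by gcongr; omega
      _ ≤ 2 ^ x + c * 2 ^ c := by rw [mul_comm]; exact Nat.le_add_left _ _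

lemma Finset.sum_le_card_mul_of_sum_two_pow_le {ι : Type*} {S : Finset ι} {f : ι → ℕ} {c : ℕ}
    (h : ∑ i ∈ S, 2 ^ f i ≤ #S * 2 ^ c) : ∑ i ∈ S, f i ≤ #S * c := by
  have htangent : 2 ^ c * (∑ i ∈ S, f i + #S) ≤ 2 ^ c * (#S * c + #S) :=
    calc 2 ^ c * (∑ i ∈ S, f i + #S) = ∑ i ∈ S, 2 ^ c * (f i + 1) := by
          simp only [mul_add, mul_one, sum_add_distrib, mul_sum, sum_const, smul_eq_mul]
          ring
      _ ≤ ∑ i ∈ S, (2 ^ f i + c * 2 ^ c) :=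
          sum_le_sum fun i _ => two_pow_mul_succ_le_two_pow_add c (f i)
      _ ≤ 2 ^ c * (#S * c + #S) := by
          rw [sum_add_distrib, sum_const, smul_eq_mul]
          nlinarith
  have := Nat.le_of_mul_le_mul_left htangent (by positivity)
  omega

lemma two_pow_eq_mul_two_pow_sub {ℓ m : ℕ} (hm : ℓ = 2 ^ m) : 2 ^ ℓ = ℓ * 2 ^ (ℓ - m) :=
  calc 2 ^ ℓ = 2 ^ (m + (ℓ - m)) := by rw [Nat.add_sub_cancel' (hm ▸ Nat.lt_two_pow_self).le]
    _ = ℓ * 2 ^ (ℓ - m) := by rw [pow_add, ← hm]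

lemma sq_sub_mul_add_eq {ℓ m : ℕ} (h : m < ℓ) : ℓ ^ 2 - ℓ * m + m = (ℓ - 1) * (ℓ - m) + ℓ := by
  have : ℓ * m ≤ ℓ ^ 2 := by nlinarith
  zify [this, h.le, show 1 ≤ ℓ by omega]
  ring

section Kraft

variable {ℓ c : ℕ} {s : ℕ → ℕ}

lemma one_le_of_two_pow_eq_mul (hc : 2 ^ ℓ = ℓ * 2 ^ c) : 1 ≤ ℓ :=
  Nat.one_le_iff_ne_zero.mpr fun h => by simp [h] at hc

lemma forall_le_pred_of_monotone
    (hmono : ∀ i ∈ Icc 1 ℓ, ∀ j ∈ Icc 1 ℓ, i ≤ j → s i ≤ s j) :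
    ∀ i ∈ Icc 1 (ℓ - 1), s i ≤ s (ℓ - 1) := fun i hi => by
  simp only [mem_Icc] at hi
  exact hmono i (mem_Icc.mpr (by omega)) _ (mem_Icc.mpr (by omega)) hi.2

lemma sum_add_le_of_kraft (hc : 2 ^ ℓ = ℓ * 2 ^ c)
    (hk : 2 ^ s (ℓ - 1) ≤ 2 ^ ℓ - ∑ i ∈ Icc 1 (ℓ - 1), 2 ^ s i) :
    ∑ i ∈ Icc 1 (ℓ - 1), s i + s (ℓ - 1) ≤ ℓ * c := by
  have hℓ : 1 ≤ ℓ := one_le_of_two_pow_eq_mul hc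
  -- the exponents `s 1, …, s (ℓ - 1), s (ℓ - 1)`, indexed by `Icc 1 ℓ`
  set f : ℕ → ℕ := fun i => s (min i (ℓ - 1))
  have hsum (g : ℕ → ℕ) : ∑ i ∈ Icc 1 ℓ, g (f i) = ∑ i ∈ Icc 1 (ℓ - 1), g (s i) + g (s (ℓ - 1)) := by
    rw [sum_Icc_one_eq_sum_Icc_pred_add hℓ]
    congr 1
    · exact sum_congr rfl fun i hi => by simp only [f, min_eq_left (mem_Icc.mp hi).2]
    · simp [f]
  have hcard : #(Icc 1 ℓ) = ℓ := by simp
  have hkraft : ∑ i ∈ Icc 1 ℓ, 2 ^ f i ≤ #(Icc 1 ℓ) * 2 ^ c := by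
    rw [hsum (2 ^ ·), hcard, ← hc]
    have : 0 < 2 ^ s (ℓ - 1) := by positivity
    omega
  calc ∑ i ∈ Icc 1 (ℓ - 1), s i + s (ℓ - 1) = ∑ i ∈ Icc 1 ℓ, f i := (hsum id).symm
    _ ≤ ℓ * c := by simpa [hcard] using sum_le_card_mul_of_sum_two_pow_le hkraft

lemma sum_le_of_kraft (hc : 2 ^ ℓ = ℓ * 2 ^ c) (hle : ∀ i ∈ Icc 1 (ℓ - 1), s i ≤ s (ℓ - 1))
    (hk : 2 ^ s (ℓ - 1) ≤ 2 ^ ℓ - ∑ i ∈ Icc 1 (ℓ - 1), 2 ^ s i) :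
    ∑ i ∈ Icc 1 (ℓ - 1), s i ≤ (ℓ - 1) * c := by
  have hadd := sum_add_le_of_kraft hc hk
  have hmax : ∑ i ∈ Icc 1 (ℓ - 1), s i ≤ (ℓ - 1) * s (ℓ - 1) := by
    simpa using sum_le_card_nsmul _ _ _ hle
  obtain ⟨n, rfl⟩ := Nat.exists_eq_add_of_le' (one_le_of_two_pow_eq_mul hc)
  simp only [Nat.add_sub_cancel] at *
  -- multiplying `hadd` by `n` and using `hmax` gives `(n + 1) * ∑ ≤ (n + 1) * n * c`
  have : (n + 1) * ∑ i ∈ Icc 1 n, s i ≤ (n + 1) * (n * c) := by nlinarith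
  exact Nat.le_of_mul_le_mul_left this n.succ_pos

lemma eq_of_sum_eq_of_kraft (hc : 2 ^ ℓ = ℓ * 2 ^ c)
    (hle : ∀ i ∈ Icc 1 (ℓ - 1), s i ≤ s (ℓ - 1))
    (hk : 2 ^ s (ℓ - 1) ≤ 2 ^ ℓ - ∑ i ∈ Icc 1 (ℓ - 1), 2 ^ s i)
    (hsum : ∑ i ∈ Icc 1 (ℓ - 1), s i = (ℓ - 1) * c) :
    ∀ i ∈ Icc 1 (ℓ - 1), s i = c := by
  have hlast : s (ℓ - 1) ≤ c := by
    have hadd := sum_add_le_of_kraft hc hk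
    obtain ⟨n, rfl⟩ := Nat.exists_eq_add_of_le' (one_le_of_two_pow_eq_mul hc)
    simp only [Nat.add_sub_cancel] at *
    nlinarith
  have hsum' : ∑ i ∈ Icc 1 (ℓ - 1), s i = ∑ _i ∈ Icc 1 (ℓ - 1), c := by simp [hsum]
  exact (sum_eq_sum_iff_of_le fun i hi => (hle i hi).trans hlast).mp hsum'

lemma gammaVec_eq_of_forall_eq (hc : 2 ^ ℓ = ℓ * 2 ^ c)
    (hs : ∀ i ∈ Icc 1 (ℓ - 1), s i = c) {j : ℕ} (hj : j < ℓ) :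
    gammaVec ℓ s j = 2 ^ c - 1 := by
  rcases Nat.eq_zero_or_pos j with rfl | hj0
  · obtain ⟨n, rfl⟩ := Nat.exists_eq_add_of_le' (one_le_of_two_pow_eq_mul hc)
    have hsum : ∑ i ∈ Icc 1 n, 2 ^ s i = n * 2 ^ c := by
      rw [sum_congr rfl fun i hi => by rw [hs i (by simpa using hi)]]
      simp
    simp only [gammaVec, if_pos, Nat.add_sub_cancel, hsum, hc, add_mul, one_mul]
    omega
  · simp only [gammaVec, if_neg hj0.ne', hs (ℓ - j) (mem_Icc.mpr (by omega))]

lemma not_anchorDecodable_of_forall_eq (hℓ : 2 ≤ ℓ) (hc : 2 ^ ℓ = ℓ * 2 ^ c)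
    (hs : ∀ i ∈ Icc 1 (ℓ - 1), s i = c) : ¬ AnchorDecodable ℓ s := by
  rintro ⟨-, -, -, hshift⟩
  obtain ⟨j, hj, hne⟩ := hshift 1 one_pos hℓ
  exact hne <| by
    rw [gammaVec_eq_of_forall_eq hc hs (Nat.mod_lt _ (by omega)), gammaVec_eq_of_forall_eq hc hs hj]

end Kraft

theorem stmt9 (ℓ : ℕ) (hℓ : 3 ≤ ℓ) (hpow : ∃ m : ℕ, ℓ = 2 ^ m) :
    (∀ s : ℕ → ℕ, AnchorDecodable ℓ s →
      ∑ i ∈ Finset.Icc 1 ℓ, s i < ℓ ^ 2 - ℓ * Nat.log 2 ℓ + Nat.log 2 ℓ) ∧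
    (∀ s : ℕ → ℕ,
      (∀ i ∈ Finset.Icc 1 ℓ, ∀ j ∈ Finset.Icc 1 ℓ, i ≤ j → s i ≤ s j) →
      s ℓ = ℓ →
      2 ^ (s (ℓ - 1)) ≤ 2 ^ ℓ - ∑ i ∈ Finset.Icc 1 (ℓ - 1), 2 ^ (s i) →
      ∑ i ∈ Finset.Icc 1 ℓ, s i = ℓ ^ 2 - ℓ * Nat.log 2 ℓ + Nat.log 2 ℓ →
      ((∀ i ∈ Finset.Icc 1 (ℓ - 1), s i = ℓ - Nat.log 2 ℓ) ∧
        ¬ AnchorDecodable ℓ s)) := by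
  obtain ⟨m, hm⟩ := hpow
  have hmℓ : m < ℓ := hm ▸ Nat.lt_two_pow_self
  have hc := two_pow_eq_mul_two_pow_sub hm
  have hsplit (s : ℕ → ℕ) (hsℓ : s ℓ = ℓ) :
      ∑ i ∈ Icc 1 ℓ, s i = ∑ i ∈ Icc 1 (ℓ - 1), s i + ℓ := by
    rw [sum_Icc_one_eq_sum_Icc_pred_add (by omega), hsℓ]
  have hlog : Nat.log 2 ℓ = m := by rw [hm, Nat.log_pow one_lt_two]
  rw [hlog, sq_sub_mul_add_eq hmℓ]
  have equality_case : ∀ s : ℕ → ℕ, (∀ i ∈ Icc 1 ℓ, ∀ j ∈ Icc 1 ℓ, i ≤ j → s i ≤ s j) →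
      s ℓ = ℓ → 2 ^ s (ℓ - 1) ≤ 2 ^ ℓ - ∑ i ∈ Icc 1 (ℓ - 1), 2 ^ s i →
      ∑ i ∈ Icc 1 ℓ, s i = (ℓ - 1) * (ℓ - m) + ℓ →
      (∀ i ∈ Icc 1 (ℓ - 1), s i = ℓ - m) ∧ ¬ AnchorDecodable ℓ s := by
    intro s hmono hsℓ hk hsum
    rw [hsplit s hsℓ, Nat.add_right_cancel_iff] at hsum
    have hs := eq_of_sum_eq_of_kraft hc (forall_le_pred_of_monotone hmono) hk hsum
    exact ⟨hs, not_anchorDecodable_of_forall_eq (by omega) hc hs⟩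
  refine ⟨fun s hs => ?_, equality_case⟩
  have ⟨hmono, hsℓ, hk, _⟩ := hs
  have hbound := sum_le_of_kraft hc (forall_le_pred_of_monotone hmono) hk
  refine lt_of_le_of_ne (by rw [hsplit s hsℓ]; omega) fun heq => ?_
  exact (equality_case s hmono hsℓ hk heq).2 hs
end
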